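/- arXiv:1909.07555 — 2 statements merged into one kernel-verified Lean document; each statement's English description precedes it below -/
import Mathlib

section
/- Let G be a simple graph with vertex set {v_1, …, v_n} and let A be any n × n complex matrix (a_{i,j}) such that a_{i,j} = 0 whenever v_i v_j is not an edge of G (in particular A has zero diagonal). Then for every subset S of the vertex set such that G − S is bipartite, rank(A) ≤ 2m(G) + |S|, where m(G) is the matching number of G. -/
/-- `(G, H)` is a complex unit gain graph: `H` is Hermitian, entries of adjacent pairs
have modulus `1`, and entries of non-adjacent pairs (including the diagonal) vanish. -/
def IsUnitGain {V : Type*} (G : SimpleGraph V) (H : Matrix V V ℂ) : Prop :=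
  H.IsHermitian ∧ (∀ i j, G.Adj i j → ‖H i j‖ = 1) ∧
    ∀ i j, ¬ G.Adj i j → H i j = 0

/-- The matching number of a simple graph: the maximum size of a matching. -/
noncomputable def matchNum {V : Type*} (G : SimpleGraph V) : ℕ :=
  sSup {n : ℕ | ∃ M : G.Subgraph, M.IsMatching ∧ M.edgeSet.ncard = n}

/-- The cyclomatic number `c(G) = |E(G)| - |V| + ω(G)` of a simple graph. -/
noncomputable def cycNum {V : Type*} (G : SimpleGraph V) : ℤ :=
  (G.edgeSet.ncard : ℤ) - (Nat.card V : ℤ) + (Nat.card G.ConnectedComponent : ℤ)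

/-- The gain of a walk: the product of the matrix entries along its darts. -/
noncomputable def gain {V : Type*} {G : SimpleGraph V} (H : Matrix V V ℂ) {u v : V}
    (w : G.Walk u v) : ℂ :=
  (w.darts.map fun d => H d.toProd.1 d.toProd.2).prod

/-- The set of vertices of `G` lying on some cycle. -/
def cycVerts {V : Type*} (G : SimpleGraph V) : Set V :=
  {u | ∃ (x : V) (w : G.Walk x x), w.IsCycle ∧ u ∈ w.support}

/-- `u` and `v` lie on a common cycle of `G`. -/
def cycleRel {V : Type*} (G : SimpleGraph V) (u v : V) : Prop :=
  ∃ (x : V) (w : G.Walk x x), w.IsCycle ∧ u ∈ w.support ∧ v ∈ w.support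

/-- The setoid generated by "lying on a common cycle". -/
def contractSetoid {V : Type*} (G : SimpleGraph V) : Setoid V :=
  Relation.EqvGen.setoid (cycleRel G)

/-- `T_G`: the graph obtained from `G` by contracting each cycle into a single vertex. -/
def TG {V : Type*} (G : SimpleGraph V) : SimpleGraph (Quotient (contractSetoid G)) where
  Adj a b := a ≠ b ∧ ∃ u v : V, Quotient.mk (contractSetoid G) u = a ∧
      Quotient.mk (contractSetoid G) v = b ∧ G.Adj u v
  symm := ⟨fun a b ⟨hne, u, v, hu, hv, hadj⟩ => ⟨hne.symm, v, u, hv, hu, hadj.symm⟩⟩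
  loopless := ⟨fun a ⟨hne, _⟩ => hne rfl⟩

/-- The rank of the principal submatrix of `H` indexed by a set `s` of vertices. -/
noncomputable def rankOn {V : Type*} [Fintype V] (H : Matrix V V ℂ) (s : Set V) : ℕ :=
  letI : Fintype s := (Set.toFinite s).fintype
  (H.submatrix (Subtype.val : s → V) (Subtype.val : s → V)).rank

/-- The cycles of `G` are pairwise vertex-disjoint: any two cycles sharing a
vertex have the same edges. -/
def cyclesDisjoint {V : Type*} (G : SimpleGraph V) : Prop :=
  ∀ ⦃x y : V⦄ (c₁ : G.Walk x x) (c₂ : G.Walk y y), c₁.IsCycle → c₂.IsCycle →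
    (∃ u, u ∈ c₁.support ∧ u ∈ c₂.support) → ∀ e, e ∈ c₁.edges ↔ e ∈ c₂.edges

/-- `b(G)`: the minimum cardinality of a set `S` of vertices such that `G - S` is
bipartite (i.e. `2`-colorable). -/
noncomputable def bipNum {V : Type*} (G : SimpleGraph V) : ℕ :=
  sInf {n : ℕ | ∃ S : Set V, S.ncard = n ∧ (G.induce Sᶜ).Colorable 2}

/-!
Split the rows of `A` into those indexed by `S` and by the two colour classes of `G - S`.
The rows indexed by `S` contribute at most `|S|` to the rank. If `X` is independent, a
nonsingular square submatrix of maximal size of the rows indexed by `X` has a nonzero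
generalised diagonal (expand its determinant); each entry `A x y` on it has `x ∈ X`, hence
`x ~ y` and `y ∉ X`, so these entries form a matching of `G` and the rows indexed by `X`
have rank at most `m(G)`.
-/

namespace Matrix

variable {m n α : Type*}

noncomputable def restrictRows [Zero α] (A : Matrix m n α) (s : Set m) : Matrix m n α :=
  of fun i j => s.indicator (fun i => A i j) i

@[simp]
theorem restrictRows_apply [Zero α] (A : Matrix m n α) (s : Set m) [DecidablePred (· ∈ s)]
    (i : m) (j : n) : A.restrictRows s i j = if i ∈ s then A i j else 0 :=
  Set.indicator_apply s (fun i => A i j) i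

theorem restrictRows_compl_add_restrictRows [AddZeroClass α] (A : Matrix m n α) (s : Set m) :
    A.restrictRows sᶜ + A.restrictRows s = A := by
  ext i j
  exact Set.indicator_compl_add_self_apply s (fun i => A i j) i

theorem restrictRows_iUnion [AddCommMonoid α] {ι : Type*} [Fintype ι] (A : Matrix m n α)
    {X : ι → Set m} (hX : Pairwise fun c d => Disjoint (X c) (X d)) :
    A.restrictRows (⋃ c, X c) = ∑ c, A.restrictRows (X c) := by
  classical
  ext i j
  simp only [restrictRows_apply, sum_apply]
  by_cases hi : i ∈ ⋃ c, X c
  · obtain ⟨c, hc⟩ := Set.mem_iUnion.mp hi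
    rw [Finset.sum_eq_single c (fun d _ hdc => by simp [(hX hdc).notMem_of_mem_right hc])
      (by simp)]
    simp [hi, hc]
  · simp only [Set.mem_iUnion, not_exists] at hi
    simp [hi]

section Rank

variable {K : Type*} [Fintype n] [Field K]

theorem rank_add_le (A B : Matrix m n K) : (A + B).rank ≤ A.rank + B.rank := by
  unfold rank
  rw [mulVecLin_add]
  calc Module.finrank K (LinearMap.range (A.mulVecLin + B.mulVecLin))
      ≤ Module.finrank K ↥(LinearMap.range A.mulVecLin ⊔ LinearMap.range B.mulVecLin) :=
        Submodule.finrank_mono (LinearMap.range_add_le _ _)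
    _ ≤ _ := Submodule.finrank_add_le_finrank_add_finrank _ _

theorem rank_sum_le {ι : Type*} (s : Finset ι) (A : ι → Matrix m n K) :
    (∑ i ∈ s, A i).rank ≤ ∑ i ∈ s, (A i).rank :=
  Finset.le_sum_of_subadditive (fun B : Matrix m n K => B.rank) rank_zero.le rank_add_le s A

theorem rank_restrictRows_le_ncard [Finite m] {R : Type*} [CommSemiring R] [StrongRankCondition R]
    (A : Matrix m n R) (s : Set m) : (A.restrictRows s).rank ≤ s.ncard := by
  classical
  rw [Set.ncard_eq_toFinset_card s]
  refine rank_le_card_of_support_subset _ _ fun i hi => ?_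
  by_contra h
  exact hi (funext fun j => by simp_all)

section Square

variable [Fintype m]

theorem exists_linearIndependent_rows {r : ℕ} (A : Matrix m n K) (hr : A.rank = r) :
    ∃ f : Fin r → m, LinearIndependent K (A.submatrix f id).row := by
  obtain ⟨κ, a, ha, hspan, hli⟩ := exists_linearIndependent' K A.row
  have : Fintype κ := Fintype.ofInjective a ha
  have hκ : Fintype.card κ = r := by
    rw [← hr, rank_eq_finrank_span_row, ← hspan, finrank_span_eq_card hli]
  exact ⟨a ∘ (Fintype.equivFinOfCardEq hκ).symm, hli.comp _ (Equiv.injective _)⟩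

theorem exists_submatrix_det_ne_zero (A : Matrix m n K) :
    ∃ (f : Fin A.rank → m) (g : Fin A.rank → n),
      Function.Injective f ∧ Function.Injective g ∧ (A.submatrix f g).det ≠ 0 := by
  obtain ⟨f, hf⟩ := A.exists_linearIndependent_rows rfl
  have hrank : (A.submatrix f id)ᵀ.rank = A.rank := by
    rw [rank_transpose, hf.rank_matrix, Fintype.card_fin]
  obtain ⟨g, hg⟩ := (A.submatrix f id)ᵀ.exists_linearIndependent_rows hrank
  refine ⟨f, g, fun i j h => hf.injective (by ext; simp [h]),
    fun i j h => hg.injective (by ext; simp [h]), ?_⟩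
  rw [← det_transpose, ← isUnit_iff_ne_zero, ← isUnit_iff_isUnit_det,
    ← linearIndependent_rows_iff_isUnit]
  exact hg

theorem exists_perm_apply_ne_zero_of_det_ne_zero {R : Type*} [CommRing R] [DecidableEq n]
    {D : Matrix n n R} (h : D.det ≠ 0) : ∃ σ : Equiv.Perm n, ∀ i, D (σ i) i ≠ 0 := by
  obtain ⟨σ, -, hσ⟩ := Finset.exists_ne_zero_of_sum_ne_zero (D.det_apply ▸ h)
  exact ⟨σ, fun i hi => hσ (by
    rw [Finset.prod_eq_zero (f := fun j => D (σ j) j) (Finset.mem_univ i) hi, smul_zero])⟩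

theorem exists_injective_apply_ne_zero (A : Matrix m n K) :
    ∃ (f : Fin A.rank → m) (g : Fin A.rank → n),
      Function.Injective f ∧ Function.Injective g ∧ ∀ i, A (f i) (g i) ≠ 0 := by
  classical
  obtain ⟨f, g, hf, hg, hdet⟩ := A.exists_submatrix_det_ne_zero
  obtain ⟨σ, hσ⟩ := exists_perm_apply_ne_zero_of_det_ne_zero hdet
  exact ⟨f ∘ σ, g, hf.comp σ.injective, hg, hσ⟩

end Square

end Rank

end Matrix

namespace SimpleGraph

variable {V : Type*} {G : SimpleGraph V}

theorem Subgraph.IsMatching.ncard_edgeSet_le_matchNum [Finite V] {M : G.Subgraph}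
    (hM : M.IsMatching) : M.edgeSet.ncard ≤ matchNum G :=
  le_csSup ⟨G.edgeSet.ncard, fun _ ⟨N, _, hN⟩ => hN ▸ Set.ncard_le_ncard N.edgeSet_subset⟩
    ⟨M, hM, rfl⟩

theorem card_le_matchNum_of_injective [Finite V] {ι : Type*} [Fintype ι] {x y : ι → V}
    (hx : x.Injective) (hy : y.Injective) (hxy : ∀ i j, x i ≠ y j)
    (hadj : ∀ i, G.Adj (x i) (y i)) : Fintype.card ι ≤ matchNum G := by
  have hM : (⨆ i, G.subgraphOfAdj (hadj i)).IsMatching := by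
    refine Subgraph.IsMatching.iSup (fun i => .subgraphOfAdj _) fun i j hij => ?_
    simp only [support_subgraphOfAdj, Set.disjoint_insert_left,
      Set.disjoint_insert_right, Set.disjoint_singleton, Set.mem_insert_iff,
      Set.mem_singleton_iff]
    exact ⟨not_or.mpr ⟨fun h => hij (hx h).symm, hxy j i⟩, hxy i j, fun h => hij (hy h)⟩
  have hinj : Function.Injective fun i => s(x i, y i) := fun i j h => by
    rcases Sym2.eq_iff.mp h with ⟨h, -⟩ | ⟨h, -⟩
    exacts [hx h, absurd h (hxy i j)]
  have hedges : (⨆ i, G.subgraphOfAdj (hadj i)).edgeSet = Set.range fun i => s(x i, y i) := by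
    simp only [Subgraph.edgeSet_iSup, edgeSet_subgraphOfAdj, Set.iUnion_singleton_eq_range]
  simpa [hedges, Set.ncard_range_of_injective hinj] using hM.ncard_edgeSet_le_matchNum

section Rank

variable [Fintype V] {K : Type*} [Field K] {A : Matrix V V K}

theorem rank_restrictRows_le_matchNum (hA : ∀ i j, ¬ G.Adj i j → A i j = 0) {X : Set V}
    (hX : G.IsIndepSet X) : (A.restrictRows X).rank ≤ matchNum G := by
  classical
  obtain ⟨f, g, hf, hg, hfg⟩ := (A.restrictRows X).exists_injective_apply_ne_zero
  have hfX : ∀ i, f i ∈ X := fun i => by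
    by_contra h
    exact hfg i (by simp [h])
  have hadj : ∀ i, G.Adj (f i) (g i) := fun i => by
    by_contra h
    exact hfg i (by simp [hA _ _ h])
  have hgX : ∀ i, g i ∉ X := fun i hgi => hX (hfX i) hgi (hadj i).ne (hadj i)
  simpa using card_le_matchNum_of_injective hf hg (fun i j h => hgX j (h ▸ hfX i)) hadj

theorem rank_restrictRows_le_mul_matchNum (hA : ∀ i j, ¬ G.Adj i j → A i j = 0) {s : Set V}
    {k : ℕ} (hs : (G.induce s).Colorable k) : (A.restrictRows s).rank ≤ k * matchNum G := by
  obtain ⟨C⟩ := hs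
  set X : Fin k → Set V := fun c => Subtype.val '' C.colorClass c
  have hindep : ∀ c, G.IsIndepSet (X c) := by
    rintro c _ ⟨u, hu, rfl⟩ _ ⟨v, hv, rfl⟩ - huv
    exact C.not_adj_of_mem_colorClass hu hv huv
  have hdisj : Pairwise fun c d => Disjoint (X c) (X d) := fun c d hcd =>
    (Set.disjoint_image_iff Subtype.val_injective).2 <|
      Set.disjoint_left.2 fun v (hc : C v = c) (hd : C v = d) => hcd (hc.symm.trans hd)
  have hcover : s = ⋃ c, X c := by
    rw [← Set.image_iUnion, Set.iUnion_eq_univ_iff.2 fun v => ⟨C v, rfl⟩, Set.image_univ,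
      Subtype.range_coe]
  calc (A.restrictRows s).rank = (∑ c, A.restrictRows (X c)).rank := by
        rw [hcover, A.restrictRows_iUnion hdisj]
    _ ≤ ∑ c, (A.restrictRows (X c)).rank := Matrix.rank_sum_le _ _
    _ ≤ ∑ _c : Fin k, matchNum G :=
        Finset.sum_le_sum fun c _ => rank_restrictRows_le_matchNum hA (hindep c)
    _ = k * matchNum G := by simp

end Rank

end SimpleGraph

/-- **Lemma.** If `A` is any complex matrix indexed by the vertices of a simple
graph `G` with `A i j = 0` whenever `i` and `j` are non-adjacent, then for every
vertex subset `S` such that `G - S` is bipartite, `rank(A) ≤ 2m(G) + |S|`. -/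
theorem rank_le_of_bipartite_deletion {V : Type*} [Fintype V]
    (G : SimpleGraph V) (A : Matrix V V ℂ)
    (hA : ∀ i j, ¬ G.Adj i j → A i j = 0)
    (S : Set V) (hS : (G.induce Sᶜ).Colorable 2) :
    A.rank ≤ 2 * matchNum G + S.ncard :=
  calc A.rank = (A.restrictRows Sᶜ + A.restrictRows S).rank := by
        rw [A.restrictRows_compl_add_restrictRows]
    _ ≤ (A.restrictRows Sᶜ).rank + (A.restrictRows S).rank := Matrix.rank_add_le _ _
    _ ≤ 2 * matchNum G + S.ncard :=
      add_le_add (G.rank_restrictRows_le_mul_matchNum hA hS) (A.rank_restrictRows_le_ncard S)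
end

section
/- Let (C_q, H) be a complex unit gain cycle of length q ≥ 3, i.e., the underlying graph is the cycle v_1 v_2 ⋯ v_q v_1. Then rank(H) = 2m(C_q) − 2c(C_q) (equivalently, rank(H) = 2⌊q/2⌋ − 2) if and only if q is even and the gain φ(C_q) = H(v_1,v_2)·H(v_2,v_3)⋯H(v_q,v_1) equals (−1)^{q/2}. -/
/-!
Write `a_t = H(t, t+1)` and `p_t = a_0 ⋯ a_{t-1}` (indices mod `q`). Row `t + 1` of `H x = 0`
reads `conj a_t · x_t + a_{t+1} · x_{t+2} = 0`; since `|a_t| = 1` this says that the gauged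
sequence `x_t p_t` is antiperiodic with period `2`. So a kernel vector is determined by
`x_0, x_1`, whence `rank H ≥ q - 2`, which already exceeds `2⌊q/2⌋ - 2` when `q` is odd.
For `q = 2m`, going once around the cycle multiplies `x_t p_t` both by `φ` and by `(-1)^m`,
so a kernel vector with `x_0 ≠ 0` forces `φ = (-1)^m`; conversely, if `φ = (-1)^m` then
`x_t = ζ^t conj p_t` with `ζ = ±i` are two independent kernel vectors. Finally the even cycle
has a perfect matching, so `m(C_q) = q/2`, and `c(C_q) = 1`.
-/

open Finset Matrix ComplexConjugate
open Fin.NatCast Fin.CommRing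

theorem Matrix.rank_add_finrank_ker_mulVecLin {m ι K : Type*} [Fintype ι] [Field K]
    (A : Matrix m ι K) :
    A.rank + Module.finrank K (LinearMap.ker A.mulVecLin) = Fintype.card ι := by
  rw [Matrix.rank, LinearMap.finrank_range_add_finrank_ker, Module.finrank_fintype_fun_eq_card]

theorem Fin.natCast_val_sub_one_add_one {k : ℕ} [NeZero k] (i : Fin k) :
    (((i - 1 : Fin k) : ℕ) : Fin k) + 1 = i := by
  rw [Fin.cast_val_eq_self, sub_add_cancel]

theorem Fin.sub_one_ne_add_one {n : ℕ} (i : Fin (n + 3)) : i - 1 ≠ i + 1 := by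
  rw [Ne, sub_eq_iff_eq_add, add_assoc, left_eq_add, ← Fin.val_eq_val]
  simp [Fin.val_add, Nat.mod_eq_of_lt (show 2 < n + 3 by omega)]

namespace SimpleGraph

variable {V : Type*} {G : SimpleGraph V}

theorem cycleGraph_adj_iff_eq_sub_one_or_eq_add_one {n : ℕ} {i j : Fin (n + 3)} :
    (cycleGraph (n + 3)).Adj i j ↔ j = i - 1 ∨ j = i + 1 := by
  rw [cycleGraph_adj (n := n + 1), sub_eq_iff_eq_add, sub_eq_iff_eq_add', eq_sub_iff_add_eq,
    eq_comm (a := j), add_comm 1 j, eq_comm (a := i)]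

theorem Subgraph.ncard_edgeSet_coe (M : G.Subgraph) : M.coe.edgeSet.ncard = M.edgeSet.ncard := by
  rw [Subgraph.edgeSet_coe]
  refine Set.ncard_preimage_of_injective_subset_range (Sym2.map.injective Subtype.val_injective) ?_
  intro e he
  induction e using Sym2.ind with
  | _ a b => exact ⟨s(⟨a, M.edge_vert he⟩, ⟨b, M.edge_vert (M.adj_symm he)⟩), rfl⟩

theorem Subgraph.IsMatching.ncard_verts_eq_two_mul [Finite V] {M : G.Subgraph}
    (hM : M.IsMatching) : M.verts.ncard = 2 * M.edgeSet.ncard := by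
  classical
  have := Fintype.ofFinite V
  have hsum := M.coe.sum_degrees_eq_twice_card_edges
  rw [sum_eq_card_nsmul (b := 1) fun v _ => ?_, card_univ, smul_eq_mul, mul_one] at hsum
  · rw [← Nat.card_coe_set_eq, Nat.card_eq_fintype_card, hsum, ← Subgraph.ncard_edgeSet_coe,
      ← coe_edgeFinset, Set.ncard_coe_finset]
  · convert isMatching_iff_forall_degree.1 hM v v.2 using 1
    convert M.coe_degree v

theorem Subgraph.IsMatching.ncard_edgeSet_le [Finite V] {M : G.Subgraph} (hM : M.IsMatching) :
    M.edgeSet.ncard ≤ Nat.card V / 2 := by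
  have hverts : M.verts.ncard ≤ Nat.card V := Set.ncard_le_card M.verts
  have := hM.ncard_verts_eq_two_mul
  omega

theorem bddAbove_ncard_edgeSet_isMatching [Finite V] :
    BddAbove {k : ℕ | ∃ M : G.Subgraph, M.IsMatching ∧ M.edgeSet.ncard = k} :=
  ⟨Nat.card V / 2, fun _ ⟨_, hM, hk⟩ => hk ▸ hM.ncard_edgeSet_le⟩

variable (G) in
theorem matchNum_le_card_div_two [Finite V] : matchNum G ≤ Nat.card V / 2 :=
  csSup_le ⟨0, ⊥, fun _ hv => hv.elim, by simp⟩
    fun _ ⟨_, hM, hk⟩ => hk ▸ hM.ncard_edgeSet_le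

theorem Subgraph.IsPerfectMatching.matchNum_eq [Finite V] {M : G.Subgraph}
    (hM : M.IsPerfectMatching) : matchNum G = Nat.card V / 2 := by
  refine (matchNum_le_card_div_two G).antisymm
    (le_csSup bddAbove_ncard_edgeSet_isMatching ⟨M, hM.1, ?_⟩)
  have := hM.1.ncard_verts_eq_two_mul
  rw [hM.2.verts_eq_univ, Set.ncard_univ] at this
  omega

theorem cycleGraph_exists_isPerfectMatching {k : ℕ} (hk : Even k) :
    ∃ M : (cycleGraph k).Subgraph, M.IsPerfectMatching := by
  obtain ⟨m, rfl⟩ := hk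
  let P : SimpleGraph (Fin (m + m)) := fromRel fun i j => i.val / 2 = j.val / 2
  have hP (i j : Fin (m + m)) : P.Adj i j ↔ i.val ≠ j.val ∧ i.val / 2 = j.val / 2 := by
    rw [fromRel_adj, Ne, Fin.ext_iff, eq_comm (a := j.val / 2), or_self]
  have hle : P ≤ cycleGraph (m + m) := fun i j h =>
    pathGraph_le_cycleGraph (pathGraph_adj.2 (by rw [hP] at h; omega))
  refine ⟨toSubgraph P hle, Subgraph.isPerfectMatching_iff.2 fun v => ?_⟩
  refine ⟨⟨if v.val % 2 = 0 then v.val + 1 else v.val - 1, by split_ifs <;> omega⟩,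
    (hP _ _).2 (by split_ifs <;> dsimp only <;> omega), fun w hw => ?_⟩
  replace hw := (hP v w).1 hw
  ext
  split_ifs <;> dsimp only <;> omega

theorem cycNum_cycleGraph (n : ℕ) : cycNum (cycleGraph (n + 3)) = 1 := by
  classical
  have hedges : (cycleGraph (n + 3)).edgeSet.ncard = n + 3 := by
    have hsum := (cycleGraph (n + 3)).sum_degrees_eq_twice_card_edges
    simp only [cycleGraph_degree_three_le, sum_const, card_univ, Fintype.card_fin,
      smul_eq_mul] at hsum
    rw [← coe_edgeFinset, Set.ncard_coe_finset]
    omega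
  have hcomp : Nat.card (cycleGraph (n + 3)).ConnectedComponent = 1 :=
    Nat.card_eq_one_iff_unique.2
      ⟨cycleGraph_preconnected.subsingleton_connectedComponent, inferInstance⟩
  rw [cycNum, hedges, hcomp, Nat.card_fin]
  push_cast
  ring

end SimpleGraph

section GainCycle

variable {n m : ℕ} {H : Matrix (Fin (n + 3)) (Fin (n + 3)) ℂ}

-- `t : ℕ` is read modulo `n + 3`: gains along the walk `0, 1, 2, …` round the cycle.
variable (H) in
def cycleEdgeGain (t : ℕ) : ℂ := H t (t + 1)

variable (H) in
def cyclePathGain (t : ℕ) : ℂ := ∏ s ∈ range t, cycleEdgeGain H s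

-- With `ζ ^ 2 = -1`, the gauged sequence `cycleKernelVec H ζ t * cyclePathGain H t = ζ ^ t`
-- is antiperiodic of period `2`, which is what the kernel equation asks for.
variable (H) in
def cycleKernelVec (ζ : ℂ) (j : Fin (n + 3)) : ℂ := ζ ^ (j : ℕ) * conj (cyclePathGain H j)

variable (n) in
def evalZeroOne : (Fin (n + 3) → ℂ) →ₗ[ℂ] ℂ × ℂ :=
  (LinearMap.proj 0).prod (LinearMap.proj 1)

theorem cycleEdgeGain_add_period (t : ℕ) :
    cycleEdgeGain H (t + (n + 3)) = cycleEdgeGain H t := by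
  rw [cycleEdgeGain, cycleEdgeGain, Nat.cast_add, Fin.natCast_self, add_zero]

@[simp]
theorem cyclePathGain_zero : cyclePathGain H 0 = 1 :=
  prod_range_zero _

theorem cyclePathGain_succ (t : ℕ) :
    cyclePathGain H (t + 1) = cyclePathGain H t * cycleEdgeGain H t :=
  prod_range_succ _ t

theorem cyclePathGain_add_period (t : ℕ) :
    cyclePathGain H (t + (n + 3)) = cyclePathGain H t * cyclePathGain H (n + 3) := by
  induction t with
  | zero => rw [zero_add, cyclePathGain_zero, one_mul]
  | succ t ih =>
    rw [Nat.add_right_comm, cyclePathGain_succ (t + (n + 3)), ih, cycleEdgeGain_add_period,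
      cyclePathGain_succ t]
    ring

theorem cyclePathGain_period :
    cyclePathGain H (n + 3) = ∏ i : Fin (n + 3), H i (finRotate (n + 3) i) := by
  rw [cyclePathGain, ← Fin.prod_univ_eq_prod_range]
  simp [cycleEdgeGain, finRotate_apply]

theorem cycleKernelVec_natCast {ζ : ℂ} (hζ : ζ ^ (n + 3) * conj (cyclePathGain H (n + 3)) = 1)
    (t : ℕ) : cycleKernelVec H ζ t = ζ ^ t * conj (cyclePathGain H t) := by
  have hper : Function.Periodic (fun t : ℕ => ζ ^ t * conj (cyclePathGain H t)) (n + 3) := by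
    intro t
    simp only [pow_add, cyclePathGain_add_period, map_mul]
    linear_combination (ζ ^ t * conj (cyclePathGain H t)) * hζ
  rw [cycleKernelVec, Fin.val_natCast]
  exact hper.map_mod_nat t

variable (hH : IsUnitGain (SimpleGraph.cycleGraph (n + 3)) H)
include hH

theorem IsUnitGain.mulVec_apply (x : Fin (n + 3) → ℂ) (i : Fin (n + 3)) :
    (H *ᵥ x) i = conj (H (i - 1) i) * x (i - 1) + H i (i + 1) * x (i + 1) := by
  have hconj : conj (H (i - 1) i) = H i (i - 1) := hH.1.apply i (i - 1)
  rw [hconj]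
  refine Fintype.sum_eq_add _ _ (Fin.sub_one_ne_add_one i) fun j hj => ?_
  show H i j * x j = 0
  rw [hH.2.2 i j (by rwa [SimpleGraph.cycleGraph_adj_iff_eq_sub_one_or_eq_add_one, not_or]),
    zero_mul]

theorem IsUnitGain.conj_cycleEdgeGain_mul_self (t : ℕ) :
    conj (cycleEdgeGain H t) * cycleEdgeGain H t = 1 := by
  have hadj : (SimpleGraph.cycleGraph (n + 3)).Adj t (t + 1) :=
    SimpleGraph.cycleGraph_adj_iff_eq_sub_one_or_eq_add_one.2 (Or.inr rfl)
  rw [Complex.conj_mul', cycleEdgeGain, hH.2.1 _ _ hadj, Complex.ofReal_one, one_pow]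

theorem IsUnitGain.cyclePathGain_ne_zero (t : ℕ) : cyclePathGain H t ≠ 0 :=
  prod_ne_zero_iff.2 fun s _ h => by simpa [h] using hH.conj_cycleEdgeGain_mul_self s

theorem IsUnitGain.mulVec_apply_natCast_add_one (x : Fin (n + 3) → ℂ) (t : ℕ) :
    (H *ᵥ x) (t + 1) =
      conj (cycleEdgeGain H t) * x t + cycleEdgeGain H (t + 1) * x ((t + 2 : ℕ)) := by
  rw [hH.mulVec_apply, add_sub_cancel_right, cycleEdgeGain, cycleEdgeGain]
  push_cast
  ring_nf

theorem IsUnitGain.antiperiodic_mul_cyclePathGain {x : Fin (n + 3) → ℂ} (hx : H *ᵥ x = 0) :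
    Function.Antiperiodic (fun t : ℕ => x t * cyclePathGain H t) 2 := by
  intro t
  have hrow := hH.mulVec_apply_natCast_add_one x t
  rw [hx, Pi.zero_apply] at hrow
  have hunit := hH.conj_cycleEdgeGain_mul_self t
  simp only [cyclePathGain_succ]
  linear_combination (-(cyclePathGain H t * cycleEdgeGain H t)) * hrow -
    (x t * cyclePathGain H t) * hunit

theorem IsUnitGain.eq_zero_of_mulVec_eq_zero {x : Fin (n + 3) → ℂ} (hx : H *ᵥ x = 0)
    (h0 : x 0 = 0) (h1 : x 1 = 0) : x = 0 := by
  have hY := hH.antiperiodic_mul_cyclePathGain hx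
  have hY01 : ∀ r : ℕ, r < 2 → x r * cyclePathGain H r = 0 := by
    intro r hr
    interval_cases r <;> simp [h0, h1]
  funext i
  rw [← Fin.cast_val_eq_self i, Pi.zero_apply]
  have := hY.add_nat_mul_eq (x := i.val % 2) (i.val / 2)
  rw [Nat.cast_id, Nat.mod_add_div', hY01 _ (Nat.mod_lt _ two_pos), mul_zero] at this
  exact (mul_eq_zero.1 this).resolve_right (hH.cyclePathGain_ne_zero _)

theorem IsUnitGain.injective_evalZeroOne_domRestrict_ker :
    Function.Injective ((evalZeroOne n).domRestrict (LinearMap.ker H.mulVecLin)) := by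
  rw [← LinearMap.ker_eq_bot, LinearMap.ker_eq_bot']
  rintro ⟨x, hx⟩ h
  exact Subtype.ext (hH.eq_zero_of_mulVec_eq_zero hx (congrArg Prod.fst h) (congrArg Prod.snd h))

theorem IsUnitGain.finrank_ker_mulVecLin_le_two :
    Module.finrank ℂ (LinearMap.ker H.mulVecLin) ≤ 2 :=
  (LinearMap.finrank_le_finrank_of_injective hH.injective_evalZeroOne_domRestrict_ker).trans_eq
    (by simp)

theorem IsUnitGain.mulVec_cycleKernelVec {ζ : ℂ} (hζ2 : ζ ^ 2 = -1)
    (hζ : ζ ^ (n + 3) * conj (cyclePathGain H (n + 3)) = 1) :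
    H *ᵥ cycleKernelVec H ζ = 0 := by
  funext i
  rw [← Fin.natCast_val_sub_one_add_one i, hH.mulVec_apply_natCast_add_one,
    cycleKernelVec_natCast hζ, cycleKernelVec_natCast hζ]
  set t := ((i - 1 : Fin (n + 3)) : ℕ)
  have hunit := hH.conj_cycleEdgeGain_mul_self (t + 1)
  simp only [cyclePathGain_succ, map_mul, pow_add, Pi.zero_apply]
  linear_combination (ζ ^ t * conj (cyclePathGain H t) * conj (cycleEdgeGain H t)) *
    (cycleEdgeGain H (t + 1) * conj (cycleEdgeGain H (t + 1)) * hζ2 - hunit)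

theorem IsUnitGain.cyclePathGain_eq_of_finrank_ker_eq_two (hm : n + 3 = 2 * m)
    (h2 : Module.finrank ℂ (LinearMap.ker H.mulVecLin) = 2) :
    cyclePathGain H (n + 3) = (-1) ^ m := by
  obtain ⟨⟨x, hx⟩, hx01⟩ := (LinearMap.injective_iff_surjective_of_finrank_eq_finrank
    (by simp [h2])).1 hH.injective_evalZeroOne_domRestrict_ker (1, 0)
  have h0 : x 0 = 1 := congrArg Prod.fst hx01
  have := (hH.antiperiodic_mul_cyclePathGain hx).add_nat_mul_eq (x := 0) m
  rwa [Nat.cast_id, zero_add, mul_comm m, ← hm, Fin.natCast_self, Nat.cast_zero, h0, one_mul,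
    cyclePathGain_zero, mul_one, mul_one] at this

theorem IsUnitGain.two_le_finrank_ker (hm : n + 3 = 2 * m)
    (hφ : cyclePathGain H (n + 3) = (-1) ^ m) :
    2 ≤ Module.finrank ℂ (LinearMap.ker H.mulVecLin) := by
  have hclose : ∀ ζ : ℂ, ζ ^ 2 = -1 → ζ ^ (n + 3) * conj (cyclePathGain H (n + 3)) = 1 := by
    intro ζ hζ2
    rw [hφ, hm, pow_mul, hζ2, map_pow, map_neg, map_one, ← mul_pow]
    norm_num
  have hmem : ∀ ζ : ℂ, ζ ^ 2 = -1 → cycleKernelVec H ζ ∈ LinearMap.ker H.mulVecLin :=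
    fun ζ hζ2 => hH.mulVec_cycleKernelVec hζ2 (hclose ζ hζ2)
  have hI : Complex.I ^ 2 = -1 := Complex.I_sq
  have hnegI : (-Complex.I) ^ 2 = -1 := by rw [neg_sq, Complex.I_sq]
  have hc : conj (cycleEdgeGain H 0) ≠ 0 :=
    left_ne_zero_of_mul_eq_one (hH.conj_cycleEdgeGain_mul_self 0)
  have hli : LinearIndependent ℂ
      ![(⟨_, hmem Complex.I hI⟩ : LinearMap.ker H.mulVecLin),
        ⟨_, hmem (-Complex.I) hnegI⟩] := by
    refine LinearIndependent.pair_iff.2 fun s t hst => ?_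
    have h0 := congr_fun (congrArg Subtype.val hst) 0
    have h1 := congr_fun (congrArg Subtype.val hst) 1
    rw [← Nat.cast_zero] at h0
    rw [← Nat.cast_one] at h1
    simp only [Submodule.coe_add, Submodule.coe_smul, Pi.add_apply, Pi.smul_apply, smul_eq_mul,
      cycleKernelVec_natCast (hclose _ hI), cycleKernelVec_natCast (hclose _ hnegI),
      ZeroMemClass.coe_zero, Pi.zero_apply, pow_zero, pow_one, cyclePathGain_zero, map_one,
      cyclePathGain_succ, one_mul] at h0 h1
    have hs : s * (2 * Complex.I * conj (cycleEdgeGain H 0)) = 0 := by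
      linear_combination h1 + Complex.I * conj (cycleEdgeGain H 0) * h0
    have hs0 := (mul_eq_zero.1 hs).resolve_right (by simp [hc, Complex.I_ne_zero])
    exact ⟨hs0, by linear_combination h0 - hs0⟩
  simpa using hli.fintype_card_le_finrank

theorem IsUnitGain.add_one_le_rank : n + 1 ≤ H.rank := by
  have hsum := H.rank_add_finrank_ker_mulVecLin
  have hker := hH.finrank_ker_mulVecLin_le_two
  rw [Fintype.card_fin] at hsum
  omega

theorem IsUnitGain.rank_eq_add_one_iff (hm : n + 3 = 2 * m) :
    H.rank = n + 1 ↔ cyclePathGain H (n + 3) = (-1) ^ m := by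
  have hsum := H.rank_add_finrank_ker_mulVecLin
  have hker := hH.finrank_ker_mulVecLin_le_two
  rw [Fintype.card_fin] at hsum
  refine ⟨fun hrank => hH.cyclePathGain_eq_of_finrank_ker_eq_two hm (by omega), fun hφ => ?_⟩
  have := hH.two_le_finrank_ker hm hφ
  omega

end GainCycle

/-- **Lemma.** A complex unit gain cycle `(C_q, H)` of length `q ≥ 3` satisfies
`rank(H) = 2m(C_q) - 2c(C_q)` iff `q` is even and the gain
`∏ i, H i (i+1)` of the cycle (here `i + 1` is taken cyclically, via `finRotate`)
equals `(-1)^(q/2)`. -/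
theorem cycle_lower_optimal_iff (q : ℕ) (hq : 3 ≤ q)
    (H : Matrix (Fin q) (Fin q) ℂ)
    (hH : IsUnitGain (SimpleGraph.cycleGraph q) H) :
    (H.rank : ℤ) = 2 * (matchNum (SimpleGraph.cycleGraph q) : ℤ) -
        2 * cycNum (SimpleGraph.cycleGraph q) ↔
      Even q ∧ ∏ i : Fin q, H i (finRotate q i) = (-1 : ℂ) ^ (q / 2) := by
  obtain ⟨n, rfl⟩ : ∃ n, q = n + 3 := ⟨q - 3, by omega⟩
  rw [SimpleGraph.cycNum_cycleGraph, ← cyclePathGain_period]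
  by_cases heven : Even (n + 3)
  · obtain ⟨M, hM⟩ := SimpleGraph.cycleGraph_exists_isPerfectMatching heven
    have hhalf := Nat.two_mul_div_two_of_even heven
    rw [hM.matchNum_eq, Nat.card_fin, ← hH.rank_eq_add_one_iff hhalf.symm]
    simp only [heven, true_and]
    omega
  · have hrank := hH.add_one_le_rank
    have hmatch := SimpleGraph.matchNum_le_card_div_two (SimpleGraph.cycleGraph (n + 3))
    rw [Nat.card_fin] at hmatch
    refine iff_of_false ?_ fun h => heven h.1
    have hhalf := Nat.two_mul_div_two_add_one_of_odd (Nat.not_even_iff_odd.1 heven)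
    omega
end
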